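/- There exist absolute constants c, C > 0 such that for every injective map τ : D → D with inverse σ = τ^{−1} : τ(D) → D, c · sup_{𝒞 ⊆ τ(D), 𝒞 nonempty} ⟦σ(𝒞)⟧/⟦𝒞⟧ ≤ C₁ ≤ C · sup_{𝒞 ⊆ τ(D), 𝒞 nonempty} ⟦σ(𝒞)⟧/⟦𝒞⟧ (in [0,∞]). -/

import Mathlib

open MeasureTheory Set
open scoped ENNReal NNReal Classical

noncomputable section

/-- A dyadic subinterval of `[0,1)`: the half-open interval
`[k/2^n, (k+1)/2^n)` with `k < 2^n`. -/
structure DyadicI where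
  n : ℕ
  k : ℕ
  hk : k < 2 ^ n

instance : Nonempty DyadicI := ⟨⟨0, 0, by norm_num⟩⟩

namespace DyadicI

/-- The length `|I| = 2^{-n}` of a dyadic interval. -/
def len (I : DyadicI) : ℝ := (2 : ℝ) ^ (-(I.n : ℤ))

/-- The left endpoint `k 2^{-n}` of a dyadic interval. -/
def lep (I : DyadicI) : ℝ := (I.k : ℝ) * I.len

/-- The underlying point set `[k/2^n, (k+1)/2^n)` of a dyadic interval. -/
def toSet (I : DyadicI) : Set ℝ := Set.Ico I.lep (I.lep + I.len)

/-- The `L^∞`-normalized Haar function `h_I`: `1` on the left half of `I`,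
`-1` on the right half of `I`, `0` off `I`. -/
def haar (I : DyadicI) (t : ℝ) : ℝ :=
  if t ∈ Set.Ico I.lep (I.lep + I.len / 2) then 1
  else if t ∈ Set.Ico (I.lep + I.len / 2) (I.lep + I.len) then -1
  else 0

end DyadicI

open DyadicI

section Defs

variable {X : Type*} [NormedAddCommGroup X] [NormedSpace ℝ X]

/-- The square function `𝕊(f)` of the `X`-valued Haar expansion `f = ∑_{I ∈ s} x_I h_I`:
`𝕊(f)(t) = (E_ε ‖∑_I ε_I x_I h_I(t)‖²)^{1/2}`, the average being taken over all
choices of signs `ε_I ∈ {±1}`, `I ∈ s`. -/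
def sqFn (s : Finset DyadicI) (x : DyadicI → X) (t : ℝ) : ℝ :=
  Real.sqrt ((∑ ε : {I // I ∈ s} → Bool,
    ‖∑ I ∈ s.attach, ((if ε I then (1 : ℝ) else -1) * haar I.1 t) • x I.1‖ ^ 2) /
      2 ^ s.card)

/-- The `H^p_X` (quasi-)norm of `f = ∑_{I ∈ s} x_I h_I`:
`‖f‖ = (∫₀¹ 𝕊(f)(t)^p dt)^{1/p}`. -/
def HpNormV (p : ℝ) (s : Finset DyadicI) (x : DyadicI → X) : ℝ :=
  (∫ t in Set.Icc (0 : ℝ) 1, sqFn s x t ^ p) ^ (1 / p)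

/-- The coefficients of `(T_{τ,p} ⊗ Id_X)(f)` for `f = ∑_{I ∈ s} x_I h_I`, namely
`(T_{τ,p} ⊗ Id_X)(f) = ∑_{I ∈ s} (|I|/|τ(I)|)^{1/p} x_I h_{τ(I)}`, as a family of
coefficients indexed by the Haar support `τ(s)`. -/
def rearrCoef (τ : DyadicI → DyadicI) (p : ℝ) (s : Finset DyadicI) (x : DyadicI → X) :
    DyadicI → X :=
  fun J => ∑ I ∈ s, if τ I = J then ((len I / len (τ I)) ^ (1 / p)) • x I else 0

/-- The scalar dyadic square function `S(f) = (∑_I a_I² 1_I)^{1/2}`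
of `f = ∑_{I ∈ s} a_I h_I`. -/
def sqFnS (s : Finset DyadicI) (a : DyadicI → ℝ) (t : ℝ) : ℝ :=
  Real.sqrt (∑ I ∈ s, a I ^ 2 * Set.indicator (toSet I) (fun _ => (1 : ℝ)) t)

/-- The scalar dyadic `H^p` (quasi-)norm `‖f‖_{H^p} = ‖S(f)‖_{L^p[0,1]}`. -/
def HpNormS (p : ℝ) (s : Finset DyadicI) (a : DyadicI → ℝ) : ℝ :=
  (∫ t in Set.Icc (0 : ℝ) 1, sqFnS s a t ^ p) ^ (1 / p)

/-- The coefficients of the scalar rearrangement operator `T_{τ,p}` applied to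
`f = ∑_{I ∈ s} a_I h_I`; `T_{τ,p}` is determined by
`T_{τ,p}(h_I/|I|^{1/p}) = h_{τ(I)}/|τ(I)|^{1/p}`. -/
def rearrCoefS (τ : DyadicI → DyadicI) (p : ℝ) (s : Finset DyadicI) (a : DyadicI → ℝ) :
    DyadicI → ℝ :=
  fun J => ∑ I ∈ s, if τ I = J then ((len I / len (τ I)) ^ (1 / p)) * a I else 0

/-- The operator norm `‖T_{τ,p} ⊗ Id_X : H^p_X → H^p_X‖ ∈ [0,∞]`, computed as the
supremum over finitely supported `f` in the unit ball of `H^p_X`. -/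
def hpOpNorm (τ : DyadicI → DyadicI) (p : ℝ) (X : Type*) [NormedAddCommGroup X]
    [NormedSpace ℝ X] : ℝ≥0∞ :=
  ⨆ (s : Finset DyadicI) (x : DyadicI → X) (_ : HpNormV p s x ≤ 1),
    ENNReal.ofReal (HpNormV p (s.image τ) (rearrCoef τ p s x))

/-- The scalar operator norm `‖T_{τ,p} : H^p → H^p‖ ∈ [0,∞]`. -/
def hpOpNormS (τ : DyadicI → DyadicI) (p : ℝ) : ℝ≥0∞ :=
  ⨆ (s : Finset DyadicI) (a : DyadicI → ℝ) (_ : HpNormS p s a ≤ 1),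
    ENNReal.ofReal (HpNormS p (s.image τ) (rearrCoefS τ p s a))

/-- For `H = τ(L)` (so that `σ(J) = I` for `J = τ(I)`, `I ∈ L`), the maximal function
`μ_H(t) = sup_{J ∈ H} (|σ(J)|/|J|) 1_J(t) = sup_{I ∈ L} (|I|/|τ(I)|) 1_{τ(I)}(t)`,
as an `[0,∞]`-valued function. -/
def muSet (τ : DyadicI → DyadicI) (L : Set DyadicI) (t : ℝ) : ℝ≥0∞ :=
  ⨆ (I : DyadicI) (_ : I ∈ L),
    ENNReal.ofReal (len I / len (τ I) * Set.indicator (toSet (τ I)) (fun _ => (1 : ℝ)) t)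

/-- For `H = τ(L)` with `L` finite, the (real-valued) maximal function
`μ_H(t) = max_{I ∈ L} (|I|/|τ(I)|) 1_{τ(I)}(t)`. -/
def muFin (τ : DyadicI → DyadicI) (L : Finset DyadicI) (t : ℝ) : ℝ :=
  ((L.sup fun I =>
    Real.toNNReal (len I / len (τ I) * Set.indicator (toSet (τ I)) (fun _ => (1 : ℝ)) t) : ℝ≥0) : ℝ)

/-- The point set `L* = ⋃_{I ∈ L} I` covered by a collection of dyadic intervals. -/
def pointSet (L : Set DyadicI) : Set ℝ := ⋃ I ∈ L, toSet I

/-- The constant `C₁ = sup_{H ⊆ τ(D), H ≠ ∅} (1/|σ(H)*|) ∫₀¹ μ_H(t) dt`, where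
nonempty collections `H ⊆ τ(D)` are parametrized as `H = τ(L)` for nonempty `L ⊆ D`,
so that `σ(H)* = L*`. -/
def Cone (τ : DyadicI → DyadicI) : ℝ≥0∞ :=
  ⨆ (L : Set DyadicI) (_ : L.Nonempty),
    (∫⁻ t in Set.Icc (0 : ℝ) 1, muSet τ L t) / volume (pointSet L)

/-- The square of the dyadic BMO norm of `g = ∑_{J ∈ s} a_J h_J`:
`‖g‖_{BMO}² = sup_{I ∈ D} (1/|I|) ∑_{J ⊆ I} a_J² |J|`. -/
def bmoSq (s : Finset DyadicI) (a : DyadicI → ℝ) : ℝ≥0∞ :=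
  ⨆ I : DyadicI, ENNReal.ofReal
    ((∑ J ∈ s.filter fun J => toSet J ⊆ toSet I, a J ^ 2 * len J) / len I)

/-- The coefficients of `S_σ(g)` for `g = ∑_{J ∈ s} a_J h_J`, where `σ = τ⁻¹` on `τ(D)`:
`S_σ(h_J) = h_{σ(J)}` for `J ∈ τ(D)` and `S_σ(h_J) = 0` otherwise, so that the
coefficient of `h_K` in `S_σ(g)` is `a_{τ(K)}` if `τ(K) ∈ s`, and `0` otherwise. -/
def sSigmaCoef (τ : DyadicI → DyadicI) (s : Finset DyadicI) (a : DyadicI → ℝ) :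
    DyadicI → ℝ :=
  fun K => if τ K ∈ s then a (τ K) else 0

/-- The Haar support of `S_σ(g)` for `g` with Haar support `s`:
`σ(s ∩ τ(D))`, i.e. the preimage under `τ` of `s`. -/
def sSigmaSupp (τ : DyadicI → DyadicI) (s : Finset DyadicI) : Finset DyadicI :=
  (s.filter fun J => J ∈ Set.range τ).image (Function.invFun τ)

/-- The operator norm `‖S_σ‖_{BMO} ∈ [0,∞]` of `S_σ` with respect to the dyadic BMO
norm, computed over finitely supported Haar expansions. -/
def bmoOpNorm (τ : DyadicI → DyadicI) : ℝ≥0∞ :=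
  ⨆ (s : Finset DyadicI) (a : DyadicI → ℝ) (_ : bmoSq s a ≤ 1),
    (bmoSq (sSigmaSupp τ s) (sSigmaCoef τ s a)) ^ (1 / 2 : ℝ)

/-- The Carleson constant `⟦C⟧ = sup_{I ∈ C} (1/|I|) ∑_{J ∈ C, J ⊆ I} |J| ∈ [0,∞]`
of a collection of dyadic intervals. -/
def carleson (C : Set DyadicI) : ℝ≥0∞ :=
  ⨆ (I : DyadicI) (_ : I ∈ C),
    (∑' J : {J : DyadicI // J ∈ C ∧ toSet J ⊆ toSet I}, ENNReal.ofReal (len J.1)) /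
      ENNReal.ofReal (len I)

/-- The `L^p_X = L^p([0,1]; X)` (Bochner) norm of `f = ∑_{I ∈ s} x_I h_I`. -/
def LpNormV (p : ℝ) (s : Finset DyadicI) (x : DyadicI → X) : ℝ :=
  (∫ t in Set.Icc (0 : ℝ) 1, ‖∑ I ∈ s, haar I t • x I‖ ^ p) ^ (1 / p)

/-- The operator norm `‖T_{τ,p} ⊗ Id_X : L^p_X → L^p_X‖ ∈ [0,∞]`, computed over
finitely supported Haar expansions. -/
def lpOpNorm (τ : DyadicI → DyadicI) (p : ℝ) (X : Type*) [NormedAddCommGroup X]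
    [NormedSpace ℝ X] : ℝ≥0∞ :=
  ⨆ (s : Finset DyadicI) (x : DyadicI → X) (_ : LpNormV p s x ≤ 1),
    ENNReal.ofReal (LpNormV p (s.image τ) (rearrCoef τ p s x))

/-- The operator norm `‖T_{τ,p}^{-1} ⊗ Id_X‖ ∈ [0,∞]` on the span of
`{h_J : J ∈ τ(D)}` with the `L^p_X` norm: the map determined by
`x h_{τ(I)}/|τ(I)|^{1/p} ↦ x h_I/|I|^{1/p}`, i.e. sending
`g = ∑_{I ∈ L} x_I h_{τ(I)}` to `∑_{I ∈ L} (|τ(I)|/|I|)^{1/p} x_I h_I`. -/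
def lpInvOpNorm (τ : DyadicI → DyadicI) (p : ℝ) (X : Type*) [NormedAddCommGroup X]
    [NormedSpace ℝ X] : ℝ≥0∞ :=
  ⨆ (L : Finset DyadicI) (x : DyadicI → X)
    (_ : LpNormV p (L.image τ) (fun J => ∑ I ∈ L, if τ I = J then x I else 0) ≤ 1),
    ENNReal.ofReal (LpNormV p L fun I => ((len (τ I) / len I) ^ (1 / p)) • x I)

/-- The operator norm `‖T_{τ,1}^{-1}‖₁ ∈ [0,∞]` on the span of `{h_J : J ∈ τ(D)}`
with the dyadic `H¹` norm: the map determined by `h_{τ(I)}/|τ(I)| ↦ h_I/|I|`,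
i.e. sending `g = ∑_{I ∈ L} a_I h_{τ(I)}` to `∑_{I ∈ L} (|τ(I)|/|I|) a_I h_I`. -/
def h1InvOpNorm (τ : DyadicI → DyadicI) : ℝ≥0∞ :=
  ⨆ (L : Finset DyadicI) (a : DyadicI → ℝ)
    (_ : HpNormS 1 (L.image τ) (fun J => ∑ I ∈ L, if τ I = J then a I else 0) ≤ 1),
    ENNReal.ofReal (HpNormS 1 L fun I => (len (τ I) / len I) * a I)

/-- The Rademacher average `(E_ε ‖∑_{i<n} ε_i a_i‖^p)^{1/p}` over all choices of
signs `ε_i ∈ {±1}`. -/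
def radAvg (p : ℝ) {Y : Type*} [NormedAddCommGroup Y] [NormedSpace ℝ Y] (n : ℕ)
    (a : Fin n → Y) : ℝ :=
  ((∑ ε : Fin n → Bool, ‖∑ i, (if ε i then (1 : ℝ) else -1) • a i‖ ^ p) / 2 ^ n) ^ (1 / p)

/-- The type-`p` constant `Type_p(Y) ∈ [0,∞]`: the least `C` such that
`(E_ε ‖∑ ε_i a_i‖^p)^{1/p} ≤ C (∑ ‖a_i‖^p)^{1/p}` for all finite families in `Y`. -/
def typeConst (p : ℝ) (Y : Type*) [NormedAddCommGroup Y] [NormedSpace ℝ Y] : ℝ≥0∞ :=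
  sInf {C : ℝ≥0∞ | ∀ (n : ℕ) (a : Fin n → Y),
    ENNReal.ofReal (radAvg p n a) ≤ C * ENNReal.ofReal ((∑ i, ‖a i‖ ^ p) ^ (1 / p))}

/-- The UMD property of a Banach space `E`: for each `1 < r < ∞` the Haar system is
unconditional in `L^r_E`. -/
def IsUMD (E : Type*) [NormedAddCommGroup E] [NormedSpace ℝ E] : Prop :=
  ∀ r : ℝ, 1 < r → ∃ β : ℝ, ∀ (s : Finset DyadicI) (x : DyadicI → E) (ε : DyadicI → ℝ),
    (∀ I, ε I = 1 ∨ ε I = -1) →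
    LpNormV r s (fun I => ε I • x I) ≤ β * LpNormV r s x

/-- `B` is a block in `L` with top `I`: `B ⊆ L`, `I` is the unique maximal interval
of `B`, and `B` is order-convex in `L` between its elements and `I`. -/
def IsBlock (L : Set DyadicI) (B : Set DyadicI) (I : DyadicI) : Prop :=
  B ⊆ L ∧ I ∈ B ∧ (∀ J ∈ B, toSet J ⊆ toSet I) ∧
    ∀ J ∈ B, ∀ K ∈ L, toSet J ⊆ toSet K → toSet K ⊆ toSet I → K ∈ B

/-- `G₁(K | E)`: the maximal dyadic intervals of `E` strictly contained in `K`. -/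
def gen1 (K : DyadicI) (E : Set DyadicI) : Set DyadicI :=
  {J | J ∈ E ∧ toSet J ⊂ toSet K ∧
    ∀ J' ∈ E, toSet J' ⊂ toSet K → toSet J ⊆ toSet J' → J' = J}

end Defs

/-!
Write `w_I = |I|/|τ(I)|`, so that `|I| = w_I |τ(I)|` and `μ = sup_I w_I 1_{τ(I)}`.

Lower bound (`c = 1`): for `I₀ ∈ L`, the images `τ(J)`, `J ∈ L`, `J ⊆ I₀`, pack with constant
`⟦τ(L)⟧`, so slicing `∑ w_J |τ(J)|` into the level sets of `w` gives
`∑_{J ⊆ I₀} |J| ≤ ⟦τ(L)⟧ ∫ μ ≤ ⟦τ(L)⟧ C₁ |I₀|`.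

Upper bound (`C = 12`): for finite `F`, discard every `I` whose image lies strictly inside the
image of some `J ∈ F` with `w_J ≥ w_I`; this does not change `μ`, and afterwards `∫ μ ≤ ∑ |I|`.
The weights are powers of two, so they at least double from a kept interval to the kept
intervals below it; hence a kept `I` whose image is more than `3/4` covered by the images of its
kept descendants has `|I| ≤ (2/3) ∑_{children} |J|`, and the remaining "sparse" intervals carry
at least a third of the total length. Their images have pairwise disjoint free parts of at least
a quarter of their length, so Carleson constant `≤ 4`; the sparse intervals themselves thus have
Carleson constant `≤ 4 sup ⟦σ(𝒞)⟧/⟦𝒞⟧`, and packing bounds their total length by that times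
`|F*|`.
-/

namespace DyadicI

instance : Countable DyadicI :=
  Function.Injective.countable (f := fun I : DyadicI => (I.n, I.k)) <| by
    rintro ⟨⟩ ⟨⟩ h
    simp_all

lemma len_pos (I : DyadicI) : 0 < I.len := by
  unfold len
  positivity

lemma mem_toSet_iff {I : DyadicI} {t : ℝ} : t ∈ I.toSet ↔ 0 ≤ t ∧ ⌊t * 2 ^ I.n⌋₊ = I.k := by
  have h2 : (0 : ℝ) < 2 ^ I.n := by positivity
  have hIco : t ∈ I.toSet ↔ (I.k : ℝ) ≤ t * 2 ^ I.n ∧ t * 2 ^ I.n < I.k + 1 := by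
    have hlen : I.len = ((2 : ℝ) ^ I.n)⁻¹ := by simp [len, zpow_neg]
    rw [toSet, lep, hlen, show (I.k : ℝ) * (2 ^ I.n)⁻¹ = I.k / 2 ^ I.n by ring,
      show (I.k : ℝ) / 2 ^ I.n + (2 ^ I.n)⁻¹ = (I.k + 1) / 2 ^ I.n by ring,
      Set.mem_Ico, div_le_iff₀ h2, lt_div_iff₀ h2]
  rw [hIco]
  constructor
  · rintro ⟨hl, hr⟩
    have h0 : 0 ≤ t * 2 ^ I.n := (Nat.cast_nonneg _).trans hl
    exact ⟨nonneg_of_mul_nonneg_left h0 h2, (Nat.floor_eq_iff h0).2 ⟨hl, hr⟩⟩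
  · rintro ⟨ht, hk⟩
    exact (Nat.floor_eq_iff (by positivity)).1 hk

lemma floor_mul_two_pow_of_mem {I : DyadicI} {t : ℝ} (ht : t ∈ I.toSet) {m : ℕ} (hm : m ≤ I.n) :
    ⌊t * 2 ^ m⌋₊ = I.k / 2 ^ (I.n - m) := by
  have hpow : (2 : ℝ) ^ m = 2 ^ I.n / ((2 ^ (I.n - m) : ℕ) : ℝ) := by
    rw [Nat.cast_pow, Nat.cast_ofNat, pow_sub₀ _ two_ne_zero hm]
    field_simp
  rw [hpow, ← mul_div_assoc, Nat.floor_div_natCast, (mem_toSet_iff.1 ht).2]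

lemma subset_or_disjoint_of_n_le {I J : DyadicI} (h : J.n ≤ I.n) :
    I.toSet ⊆ J.toSet ∨ Disjoint I.toSet J.toSet := by
  by_cases hk : I.k / 2 ^ (I.n - J.n) = J.k
  · exact Or.inl fun t ht =>
      mem_toSet_iff.2 ⟨(mem_toSet_iff.1 ht).1, (floor_mul_two_pow_of_mem ht h).trans hk⟩
  · exact Or.inr <| Set.disjoint_left.2 fun t hI hJ =>
      hk ((floor_mul_two_pow_of_mem hI h).symm.trans (mem_toSet_iff.1 hJ).2)

lemma subset_or_subset_or_disjoint (I J : DyadicI) :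
    I.toSet ⊆ J.toSet ∨ J.toSet ⊆ I.toSet ∨ Disjoint I.toSet J.toSet := by
  rcases le_total J.n I.n with h | h
  · exact (subset_or_disjoint_of_n_le h).imp_right Or.inr
  · rcases subset_or_disjoint_of_n_le h with h' | h'
    · exact Or.inr (Or.inl h')
    · exact Or.inr (Or.inr h'.symm)

lemma volume_toSet (I : DyadicI) : volume I.toSet = ENNReal.ofReal I.len := by
  rw [toSet, Real.volume_Ico, add_sub_cancel_left]

lemma measurableSet_toSet (I : DyadicI) : MeasurableSet I.toSet := measurableSet_Ico

lemma lep_mem_toSet (I : DyadicI) : I.lep ∈ I.toSet :=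
  ⟨le_rfl, lt_add_of_pos_right _ I.len_pos⟩

lemma toSet_subset_Icc (I : DyadicI) : I.toSet ⊆ Set.Icc 0 1 := by
  intro t ht
  obtain ⟨ht0, hk⟩ := mem_toSet_iff.1 ht
  have h : ⌊t * 2 ^ I.n⌋₊ < 2 ^ I.n := hk ▸ I.hk
  rw [Nat.floor_lt (by positivity), Nat.cast_pow, Nat.cast_ofNat] at h
  exact ⟨ht0, (by simpa using h : t < 1).le⟩

lemma len_le_of_subset {I J : DyadicI} (h : I.toSet ⊆ J.toSet) : I.len ≤ J.len := by
  have := measure_mono (μ := volume) h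
  rwa [volume_toSet, volume_toSet, ENNReal.ofReal_le_ofReal_iff J.len_pos.le] at this

lemma eq_of_subset_of_len_le {I J : DyadicI} (h : I.toSet ⊆ J.toSet) (hl : J.len ≤ I.len) :
    I = J := by
  have hn : I.n = J.n := by
    have := zpow_right_injective₀ two_pos (by norm_num) (le_antisymm (len_le_of_subset h) hl)
    omega
  have hk := (mem_toSet_iff.1 (h I.lep_mem_toSet)).2
  rw [← hn, (mem_toSet_iff.1 I.lep_mem_toSet).2] at hk
  obtain ⟨n, k, _⟩ := I
  obtain ⟨n', k', _⟩ := J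
  simp_all

lemma toSet_injective : Function.Injective toSet := fun _ _ h =>
  eq_of_subset_of_len_le h.subset (len_le_of_subset h.symm.subset)

lemma len_lt_of_ssubset {I J : DyadicI} (h : I.toSet ⊂ J.toSet) : I.len < J.len :=
  (len_le_of_subset h.subset).lt_of_ne fun hl =>
    h.ne (congrArg toSet (eq_of_subset_of_len_le h.subset hl.ge))

lemma ssubset_or_ssubset_or_disjoint {I J : DyadicI} (h : I ≠ J) :
    I.toSet ⊂ J.toSet ∨ J.toSet ⊂ I.toSet ∨ Disjoint I.toSet J.toSet := by
  have hne : I.toSet ≠ J.toSet := toSet_injective.ne h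
  rcases subset_or_subset_or_disjoint I J with h' | h' | h'
  · exact Or.inl (h'.ssubset_of_ne hne)
  · exact Or.inr (Or.inl (h'.ssubset_of_ne hne.symm))
  · exact Or.inr (Or.inr h')

end DyadicI

section Maximals

variable {ι : Type*} (f : ι → DyadicI)

def maximalsBy (S : Finset ι) : Finset ι :=
  S.filter fun j => ∀ k ∈ S, ¬ toSet (f j) ⊂ toSet (f k)

variable {f}

lemma exists_mem_maximalsBy {S : Finset ι} {i : ι} (hi : i ∈ S) :
    ∃ j ∈ maximalsBy f S, toSet (f i) ⊆ toSet (f j) := by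
  obtain ⟨j, hj, hmax⟩ := (S.filter fun j => toSet (f i) ⊆ toSet (f j)).exists_max_image
    (fun j => len (f j)) ⟨i, Finset.mem_filter.2 ⟨hi, subset_rfl⟩⟩
  rw [Finset.mem_filter] at hj
  refine ⟨j, Finset.mem_filter.2 ⟨hj.1, fun k hk hjk => ?_⟩, hj.2⟩
  exact (len_lt_of_ssubset hjk).not_ge (hmax k (Finset.mem_filter.2 ⟨hk, hj.2.trans hjk.subset⟩))

lemma pairwiseDisjoint_maximalsBy (hf : Function.Injective f) (S : Finset ι) :
    (maximalsBy f S : Set ι).PairwiseDisjoint (toSet ∘ f) := by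
  intro j hj k hk hjk
  simp only [maximalsBy, Finset.coe_filter, Set.mem_ofPred_eq] at hj hk
  rcases ssubset_or_ssubset_or_disjoint (hf.ne hjk) with h | h | h
  · exact absurd h (hj.2 k hk.1)
  · exact absurd h (hk.2 j hj.1)
  · exact h

end Maximals

lemma sum_len_le_carleson_mul_len {C : Set DyadicI} {I : DyadicI} (hI : I ∈ C)
    (S : Finset DyadicI) (hS : ∀ J ∈ S, J ∈ C ∧ toSet J ⊆ toSet I) :
    ∑ J ∈ S, ENNReal.ofReal (len J) ≤ carleson C * ENNReal.ofReal (len I) := by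
  have hI' : ENNReal.ofReal (len I) ≠ 0 := (ENNReal.ofReal_pos.2 I.len_pos).ne'
  rw [← ENNReal.div_le_iff hI' ENNReal.ofReal_ne_top,
    ← Finset.sum_subtype_of_mem _ hS]
  refine (ENNReal.div_le_div_right (ENNReal.sum_le_tsum _) _).trans ?_
  exact le_iSup₂ (α := ℝ≥0∞) (f := fun I (_ : I ∈ C) => _) I hI

lemma carleson_le_of_forall_sum_le {C : Set DyadicI} {c : ℝ≥0∞}
    (h : ∀ I ∈ C, ∀ S : Finset DyadicI, (∀ J ∈ S, J ∈ C ∧ toSet J ⊆ toSet I) →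
      ∑ J ∈ S, ENNReal.ofReal (len J) ≤ c * ENNReal.ofReal (len I)) :
    carleson C ≤ c := by
  refine iSup₂_le fun I hI => ENNReal.div_le_of_le_mul ?_
  rw [ENNReal.tsum_eq_iSup_sum]
  refine iSup_le fun s => ?_
  rw [← Finset.sum_image (f := fun J => ENNReal.ofReal (len J)) Subtype.val_injective.injOn]
  refine h I hI _ fun J hJ => ?_
  obtain ⟨J, -, rfl⟩ := Finset.mem_image.1 hJ
  exact J.2

lemma one_le_carleson {C : Set DyadicI} (hC : C.Nonempty) : 1 ≤ carleson C := by
  obtain ⟨I, hI⟩ := hC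
  have h := sum_len_le_carleson_mul_len hI {I} (by simpa using hI)
  rw [Finset.sum_singleton] at h
  exact (ENNReal.mul_le_mul_iff_left (ENNReal.ofReal_pos.2 I.len_pos).ne'
    ENNReal.ofReal_ne_top).1 (by simpa using h)

lemma sum_len_le_carleson_mul_volume {ι : Type*} {f : ι → DyadicI} (hf : Function.Injective f)
    {C : Set DyadicI} (S : Finset ι) (hS : ∀ i ∈ S, f i ∈ C) :
    ∑ i ∈ S, ENNReal.ofReal (len (f i)) ≤ carleson C * volume (⋃ i ∈ S, toSet (f i)) := by
  choose! top htop_mem htop_sub using fun i (hi : i ∈ S) => exists_mem_maximalsBy (f := f) hi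
  have hmax : ∀ j ∈ maximalsBy f S, j ∈ S := fun j hj => (Finset.mem_filter.1 hj).1
  calc ∑ i ∈ S, ENNReal.ofReal (len (f i))
      = ∑ j ∈ maximalsBy f S, ∑ i ∈ S with top i = j, ENNReal.ofReal (len (f i)) :=
        (Finset.sum_fiberwise_of_maps_to htop_mem _).symm
    _ ≤ ∑ j ∈ maximalsBy f S, carleson C * ENNReal.ofReal (len (f j)) := by
        refine Finset.sum_le_sum fun j hj => ?_
        rw [← Finset.sum_image (f := fun K => ENNReal.ofReal (len K)) hf.injOn]
        refine sum_len_le_carleson_mul_len (hS j (hmax j hj)) _ fun K hK => ?_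
        obtain ⟨i, hi, rfl⟩ := Finset.mem_image.1 hK
        obtain ⟨hiS, rfl⟩ := Finset.mem_filter.1 hi
        exact ⟨hS i hiS, htop_sub i hiS⟩
    _ = carleson C * volume (⋃ j ∈ maximalsBy f S, toSet (f j)) := by
        rw [← Finset.mul_sum, measure_biUnion_finset (f := fun j => toSet (f j))
          (pairwiseDisjoint_maximalsBy hf S) fun j _ => measurableSet_toSet _]
        simp only [volume_toSet]
    _ ≤ carleson C * volume (⋃ i ∈ S, toSet (f i)) :=
        mul_le_mul_right (measure_mono <| Set.iUnion₂_subset fun j hj =>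
          Set.subset_iUnion₂ (s := fun i (_ : i ∈ S) => toSet (f i)) j (hmax j hj)) _

def carlesonRatio (τ : DyadicI → DyadicI) : ℝ≥0∞ :=
  ⨆ (L : Set DyadicI) (_ : L.Nonempty), carleson L / carleson (τ '' L)

lemma carleson_le_carlesonRatio_mul {τ : DyadicI → DyadicI} {L : Set DyadicI}
    (hL : L.Nonempty) (hfin : carleson (τ '' L) ≠ ⊤) :
    carleson L ≤ carlesonRatio τ * carleson (τ '' L) :=
  (ENNReal.div_le_iff (zero_lt_one.trans_le (one_le_carleson (hL.image τ))).ne' hfin).1 <|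
    le_iSup₂ (α := ℝ≥0∞) (f := fun L (_ : Set.Nonempty L) => _) L hL

lemma sum_mul_measure_le_lintegral_biSup {ι α : Type*} [MeasurableSpace α] {μ : Measure α}
    {A : ι → Set α} (hA : ∀ i, MeasurableSet (A i)) {D : ℝ≥0∞} (B : Finset ι)
    (hB : ∀ B' ⊆ B, ∑ i ∈ B', μ (A i) ≤ D * μ (⋃ i ∈ B', A i)) (ω : ι → ℝ≥0∞) :
    ∑ i ∈ B, ω i * μ (A i) ≤ D * ∫⁻ x, ⨆ i ∈ B, (A i).indicator (fun _ => ω i) x ∂μ := by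
  induction B using Finset.strongInduction generalizing ω with | H B ih =>
  rcases B.eq_empty_or_nonempty with rfl | hne
  · simp
  -- peel off the layer of height `m = min ω` covering `⋃ B`, and recurse on the rest
  obtain ⟨i₀, hi₀, hmin⟩ := B.exists_min_image ω hne
  set m := ω i₀
  set U := ⋃ i ∈ B, A i
  set R := fun x => ⨆ i ∈ B, (A i).indicator (fun _ => ω i) x
  have hlt : B.filter (m < ω ·) ⊂ B :=
    Finset.filter_ssubset.2 ⟨i₀, hi₀, lt_irrefl m⟩
  have hrest := ih _ hlt (fun B' h => hB B' (h.trans hlt.subset)) (fun i => ω i - m)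
  have hsplit : ∑ i ∈ B, ω i * μ (A i) =
      ∑ i ∈ B.filter (m < ω ·), (ω i - m) * μ (A i) + m * ∑ i ∈ B, μ (A i) := by
    rw [Finset.sum_filter_of_ne fun i _ h =>
        tsub_pos_iff_lt.1 (pos_of_ne_zero (left_ne_zero_of_mul h)),
      Finset.mul_sum, ← Finset.sum_add_distrib]
    exact Finset.sum_congr rfl fun i hi => by rw [← add_mul, tsub_add_cancel_of_le (hmin i hi)]
  have hU : ∀ x, U.indicator (fun _ => m) x ≤ R x := by
    intro x
    by_cases hx : x ∈ U
    · obtain ⟨j, hj, hxj⟩ := Set.mem_iUnion₂.1 hx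
      rw [Set.indicator_of_mem hx]
      exact le_iSup₂_of_le j hj (by rw [Set.indicator_of_mem hxj]; exact hmin j hj)
    · simp [hx]
  have hrestR : ∀ x, ⨆ i ∈ B.filter (m < ω ·), (A i).indicator (fun _ => ω i - m) x ≤
      R x - U.indicator (fun _ => m) x := by
    intro x
    refine iSup₂_le fun i hi => ?_
    have hiB := (Finset.mem_filter.1 hi).1
    by_cases hx : x ∈ A i
    · have hxU : x ∈ U := Set.mem_biUnion (x := i) hiB hx
      rw [Set.indicator_of_mem hx, Set.indicator_of_mem hxU]
      exact tsub_le_tsub_right (le_iSup₂_of_le i hiB (by rw [Set.indicator_of_mem hx])) _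
    · simp [hx]
  have hUmeas : MeasurableSet U := Finset.measurableSet_biUnion _ fun i _ => hA i
  calc ∑ i ∈ B, ω i * μ (A i)
      ≤ D * (∫⁻ x, ⨆ i ∈ B.filter (m < ω ·), (A i).indicator (fun _ => ω i - m) x ∂μ)
        + m * (D * μ U) := by
        rw [hsplit]
        exact add_le_add hrest (mul_le_mul_right (hB B subset_rfl) _)
    _ = D * ∫⁻ x, (⨆ i ∈ B.filter (m < ω ·), (A i).indicator (fun _ => ω i - m) x)
        + U.indicator (fun _ => m) x ∂μ := by
        rw [lintegral_add_right _ (measurable_const.indicator hUmeas),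
          lintegral_indicator_const hUmeas]
        ring
    _ ≤ D * ∫⁻ x, R x ∂μ :=
        mul_le_mul_right (lintegral_mono fun x =>
          add_le_of_le_tsub_right_of_le (hU x) (hrestR x)) _

section Weight

variable (τ : DyadicI → DyadicI)

def weight (I : DyadicI) : ℝ := len I / len (τ I)

lemma weight_pos (I : DyadicI) : 0 < weight τ I := div_pos I.len_pos (τ I).len_pos

lemma weight_mul_len (I : DyadicI) : weight τ I * len (τ I) = len I :=
  div_mul_cancel₀ _ (τ I).len_pos.ne'

variable {τ} in
lemma two_mul_weight_le_of_lt {I J : DyadicI} (h : weight τ I < weight τ J) :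
    2 * weight τ I ≤ weight τ J := by
  have hpow : ∀ K, weight τ K = 2 ^ ((τ K).n - K.n : ℤ) := fun K => by
    rw [weight, len, len, ← zpow_sub₀ two_ne_zero]
    ring_nf
  rw [hpow, hpow] at h ⊢
  have := (zpow_lt_zpow_iff_right₀ one_lt_two).1 h
  calc 2 * (2 : ℝ) ^ ((τ I).n - I.n : ℤ) = 2 ^ ((τ I).n - I.n + 1 : ℤ) := by
        rw [zpow_add_one₀ two_ne_zero, mul_comm]
    _ ≤ 2 ^ ((τ J).n - J.n : ℤ) := zpow_le_zpow_right₀ one_le_two (by omega)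

lemma muSet_apply (L : Set DyadicI) (t : ℝ) :
    muSet τ L t = ⨆ I ∈ L, (toSet (τ I)).indicator (fun _ => ENNReal.ofReal (weight τ I)) t := by
  simp only [muSet, weight]
  congr! 3 with I
  by_cases ht : t ∈ toSet (τ I) <;> simp [ht]

lemma measurable_muSet (L : Set DyadicI) : Measurable (muSet τ L) := by
  unfold muSet
  exact Measurable.iSup fun I => Measurable.iSup fun _ =>
    ((measurable_const.indicator (measurableSet_toSet _)).const_mul _).ennreal_ofReal

variable {τ} in
lemma muSet_mono {L L' : Set DyadicI} (h : L ⊆ L') : muSet τ L ≤ muSet τ L' :=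
  fun _ => biSup_mono h

end Weight

lemma lintegral_muSet_le_cone (τ : DyadicI → DyadicI) {L : Set DyadicI} (hL : L.Nonempty) :
    ∫⁻ t in Set.Icc 0 1, muSet τ L t ≤ Cone τ * volume (pointSet L) := by
  have hne : volume (pointSet L) ≠ 0 := by
    obtain ⟨I, hI⟩ := hL
    refine (lt_of_lt_of_le ?_ (measure_mono (Set.subset_biUnion_of_mem hI))).ne'
    rw [volume_toSet]
    exact ENNReal.ofReal_pos.2 I.len_pos
  have hfin : volume (pointSet L) ≠ ⊤ :=
    ne_top_of_le_ne_top (by simp) (measure_mono (Set.iUnion₂_subset fun I _ => toSet_subset_Icc I))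
  rw [← ENNReal.div_le_iff hne hfin]
  exact le_iSup₂ (α := ℝ≥0∞) (f := fun L (_ : Set.Nonempty L) => _) L hL

lemma lintegral_muSet_le_of_forall_finset {τ : DyadicI → DyadicI} {L : Set DyadicI} {c : ℝ≥0∞}
    (h : ∀ F : Finset DyadicI, ↑F ⊆ L →
      ∫⁻ t in Set.Icc 0 1, muSet τ F t ≤ c * volume (pointSet F)) :
    ∫⁻ t in Set.Icc 0 1, muSet τ L t ≤ c * volume (pointSet L) := by
  have hsup : muSet τ L = fun t => ⨆ F : {F : Finset DyadicI // ↑F ⊆ L}, muSet τ F.1 t := by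
    refine le_antisymm (fun t => iSup₂_le fun I hI => ?_)
      (fun t => iSup_le fun F => muSet_mono F.2 t)
    refine le_iSup_of_le ⟨{I}, by simpa using hI⟩ ?_
    exact le_iSup₂_of_le (α := ℝ≥0∞)
      (f := fun J (_ : J ∈ (({I} : Finset DyadicI) : Set DyadicI)) => _) I (by simp) le_rfl
  have hdir : Directed (· ≤ ·) fun F : {F : Finset DyadicI // ↑F ⊆ L} => muSet τ F.1 :=
    fun F G => ⟨⟨F.1 ∪ G.1, by simpa using ⟨F.2, G.2⟩⟩,
      muSet_mono (by simp), muSet_mono (by simp)⟩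
  rw [hsup, lintegral_iSup_directed (fun F => (measurable_muSet τ _).aemeasurable) hdir]
  refine iSup_le fun F => (h F.1 F.2).trans (mul_le_mul_right (measure_mono ?_) _)
  exact Set.biUnion_subset_biUnion_left F.2

theorem carleson_le_cone_mul_carleson_image {τ : DyadicI → DyadicI}
    (hτ : Function.Injective τ) (L : Set DyadicI) :
    carleson L ≤ Cone τ * carleson (τ '' L) := by
  refine carleson_le_of_forall_sum_le fun I₀ _ B hB => ?_
  rcases B.eq_empty_or_nonempty with rfl | hne
  · simp
  have hpack : ∀ B' ⊆ B, ∑ J ∈ B', volume (toSet (τ J)) ≤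
      carleson (τ '' L) * volume (⋃ J ∈ B', toSet (τ J)) := fun B' hB' => by
    simp only [volume_toSet]
    exact sum_len_le_carleson_mul_volume hτ B' fun J hJ => ⟨J, (hB J (hB' hJ)).1, rfl⟩
  have hsupp : ∫⁻ x, ⨆ J ∈ B, (toSet (τ J)).indicator (fun _ => ENNReal.ofReal (weight τ J)) x =
      ∫⁻ t in Set.Icc 0 1, muSet τ B t := by
    rw [setLIntegral_eq_of_support_subset]
    · simp [muSet_apply]
    · refine Function.support_subset_iff'.2 fun x hx => ?_
      simp only [muSet_apply, Finset.mem_coe]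
      refine nonpos_iff_eq_zero.1 (iSup₂_le fun J _ => ?_)
      exact (Set.indicator_of_notMem (fun h => hx (toSet_subset_Icc _ h)) _).le
  calc ∑ J ∈ B, ENNReal.ofReal (len J)
      = ∑ J ∈ B, ENNReal.ofReal (weight τ J) * volume (toSet (τ J)) := by
        simp only [volume_toSet, ← ENNReal.ofReal_mul (weight_pos τ _).le, weight_mul_len]
    _ ≤ carleson (τ '' L) * ∫⁻ t in Set.Icc 0 1, muSet τ B t := by
        rw [← hsupp]
        exact sum_mul_measure_le_lintegral_biSup (fun J => measurableSet_toSet _) B hpack _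
    _ ≤ carleson (τ '' L) * (Cone τ * volume (toSet I₀)) := by
        refine mul_le_mul_right ((lintegral_muSet_le_cone τ (by simpa using hne)).trans ?_) _
        exact mul_le_mul_right (measure_mono (Set.iUnion₂_subset fun J hJ => (hB J hJ).2)) _
    _ = Cone τ * carleson (τ '' L) * ENNReal.ofReal (len I₀) := by
        rw [volume_toSet]
        ring

theorem carlesonRatio_le_cone {τ : DyadicI → DyadicI} (hτ : Function.Injective τ) :
    carlesonRatio τ ≤ Cone τ :=
  iSup₂_le fun L _ => ENNReal.div_le_of_le_mul (carleson_le_cone_mul_carleson_image hτ L)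

section Pruning

variable (τ : DyadicI → DyadicI)

def pruned (F : Finset DyadicI) : Finset DyadicI :=
  F.filter fun I => ∀ J ∈ F, toSet (τ I) ⊂ toSet (τ J) → weight τ J < weight τ I

variable {τ}

lemma exists_mem_pruned {F : Finset DyadicI} {I : DyadicI} (hI : I ∈ F) :
    ∃ I' ∈ pruned τ F, toSet (τ I) ⊆ toSet (τ I') ∧ weight τ I ≤ weight τ I' := by
  obtain ⟨I', hI', hsub⟩ := exists_mem_maximalsBy (f := τ)
    (S := F.filter (weight τ I ≤ weight τ ·)) (Finset.mem_filter.2 ⟨hI, le_rfl⟩)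
  obtain ⟨hI'F, hw⟩ := Finset.mem_filter.1 (Finset.mem_filter.1 hI').1
  refine ⟨I', Finset.mem_filter.2 ⟨hI'F, fun J hJ hss => ?_⟩, hsub, hw⟩
  by_contra! hJ'
  exact (Finset.mem_filter.1 hI').2 J (Finset.mem_filter.2 ⟨hJ, hw.trans hJ'⟩) hss

lemma muSet_pruned (F : Finset DyadicI) : muSet τ (pruned τ F) = muSet τ F := by
  refine le_antisymm (muSet_mono (Finset.coe_subset.2 (Finset.filter_subset _ _))) fun t => ?_
  simp only [muSet_apply]
  refine iSup₂_le fun I hI => ?_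
  obtain ⟨I', hI', hsub, hw⟩ := exists_mem_pruned hI
  refine le_iSup₂_of_le (α := ℝ≥0∞) (f := fun I (_ : I ∈ (pruned τ F : Set DyadicI)) => _) I' hI' ?_
  by_cases ht : t ∈ toSet (τ I)
  · rw [Set.indicator_of_mem ht, Set.indicator_of_mem (hsub ht)]
    exact ENNReal.ofReal_le_ofReal hw
  · simp [ht]

lemma lintegral_muSet_le_sum (F : Finset DyadicI) :
    ∫⁻ t in Set.Icc 0 1, muSet τ F t ≤ ∑ I ∈ F, ENNReal.ofReal (len I) :=
  calc ∫⁻ t in Set.Icc 0 1, muSet τ F t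
      ≤ ∫⁻ t, ∑ I ∈ F, (toSet (τ I)).indicator (fun _ => ENNReal.ofReal (weight τ I)) t := by
        refine setLIntegral_le_lintegral _ _ |>.trans (lintegral_mono fun t => ?_)
        rw [muSet_apply]
        exact iSup₂_le fun I hI => Finset.single_le_sum (f := fun I =>
          (toSet (τ I)).indicator (fun _ => ENNReal.ofReal (weight τ I)) t)
          (fun _ _ => zero_le) hI
    _ = ∑ I ∈ F, ENNReal.ofReal (len I) := by
        rw [lintegral_finsetSum _ fun I _ => measurable_const.indicator (measurableSet_toSet _)]
        simp only [lintegral_indicator_const (measurableSet_toSet _), volume_toSet,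
          ← ENNReal.ofReal_mul (weight_pos τ _).le, weight_mul_len]

end Pruning

section Sparse

variable (τ : DyadicI → DyadicI)

def descendants (P : Finset DyadicI) (I : DyadicI) : Finset DyadicI :=
  P.filter fun J => toSet (τ J) ⊂ toSet (τ I)

def freePart (P : Finset DyadicI) (I : DyadicI) : Set ℝ :=
  toSet (τ I) \ ⋃ J ∈ descendants τ P I, toSet (τ J)

def children (P : Finset DyadicI) (I : DyadicI) : Finset DyadicI :=
  maximalsBy τ (descendants τ P I)

def sparse (F : Finset DyadicI) : Finset DyadicI :=
  (pruned τ F).filter fun I => volume (toSet (τ I)) ≤ 4 * volume (freePart τ (pruned τ F) I)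

variable {τ}

lemma pairwiseDisjoint_freePart (hτ : Function.Injective τ) (P : Finset DyadicI) :
    (P : Set DyadicI).PairwiseDisjoint (freePart τ P) := by
  intro I hI J hJ hIJ
  rcases ssubset_or_ssubset_or_disjoint (hτ.ne hIJ) with h | h | h
  · exact Set.disjoint_left.2 fun t htI htJ =>
      htJ.2 (Set.mem_biUnion (x := I) (Finset.mem_filter.2 ⟨hI, h⟩) htI.1)
  · exact Set.disjoint_right.2 fun t htJ htI =>
      htI.2 (Set.mem_biUnion (x := J) (Finset.mem_filter.2 ⟨hJ, h⟩) htJ.1)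
  · exact h.mono Set.sdiff_subset Set.sdiff_subset

lemma carleson_image_sparse_le (hτ : Function.Injective τ) (F : Finset DyadicI) :
    carleson (τ '' sparse τ F) ≤ 4 := by
  refine carleson_le_of_forall_sum_le ?_
  rintro _ ⟨I₀, -, rfl⟩ T hT
  set S := (sparse τ F).filter fun J => toSet (τ J) ⊆ toSet (τ I₀)
  have hTS : T ⊆ S.image τ := fun K hK => by
    obtain ⟨⟨J, hJ, rfl⟩, hsub⟩ := hT K hK
    exact Finset.mem_image_of_mem τ (Finset.mem_filter.2 ⟨hJ, hsub⟩)
  have hSP : S ⊆ pruned τ F := (Finset.filter_subset _ _).trans (Finset.filter_subset _ _)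
  calc ∑ K ∈ T, ENNReal.ofReal (len K)
      ≤ ∑ J ∈ S, volume (toSet (τ J)) := by
        simp only [volume_toSet]
        exact (Finset.sum_le_sum_of_subset hTS).trans_eq (Finset.sum_image hτ.injOn)
    _ ≤ ∑ J ∈ S, 4 * volume (freePart τ (pruned τ F) J) :=
        Finset.sum_le_sum fun J hJ => (Finset.mem_filter.1 (Finset.mem_filter.1 hJ).1).2
    _ = 4 * volume (⋃ J ∈ S, freePart τ (pruned τ F) J) := by
        rw [← Finset.mul_sum, measure_biUnion_finset
          ((pairwiseDisjoint_freePart hτ _).subset (Finset.coe_subset.2 hSP))]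
        exact fun J _ => (measurableSet_toSet _).diff
          (Finset.measurableSet_biUnion _ fun _ _ => measurableSet_toSet _)
    _ ≤ 4 * ENNReal.ofReal (len (τ I₀)) := by
        rw [← volume_toSet]
        refine mul_le_mul_right (measure_mono (Set.iUnion₂_subset fun J hJ => ?_)) _
        exact Set.sdiff_subset.trans (Finset.mem_filter.1 hJ).2

lemma mem_children {P : Finset DyadicI} {I J : DyadicI} :
    J ∈ children τ P I ↔ J ∈ descendants τ P I ∧
      ∀ K ∈ descendants τ P I, ¬ toSet (τ J) ⊂ toSet (τ K) :=
  Finset.mem_filter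

lemma disjoint_children (hτ : Function.Injective τ) {P : Finset DyadicI} {I I' : DyadicI}
    (hI : I ∈ P) (hI' : I' ∈ P) (hne : I ≠ I') :
    Disjoint (children τ P I) (children τ P I') := by
  refine Finset.disjoint_left.2 fun J hJ hJ' => ?_
  obtain ⟨hJd, hJmax⟩ := mem_children.1 hJ
  obtain ⟨hJd', hJmax'⟩ := mem_children.1 hJ'
  have hJI := (Finset.mem_filter.1 hJd).2
  have hJI' := (Finset.mem_filter.1 hJd').2
  rcases ssubset_or_ssubset_or_disjoint (hτ.ne hne) with h | h | h
  · exact hJmax' I (Finset.mem_filter.2 ⟨hI, h⟩) hJI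
  · exact hJmax I' (Finset.mem_filter.2 ⟨hI', h⟩) hJI'
  · exact h.ne_of_mem (hJI.subset (lep_mem_toSet _)) (hJI'.subset (lep_mem_toSet _)) rfl

end Sparse

section UpperBound

variable {τ : DyadicI → DyadicI}

lemma len_le_two_div_three_mul_sum_children {F : Finset DyadicI} {I : DyadicI} (hI : I ∈ pruned τ F)
    (hdense : ¬ volume (toSet (τ I)) ≤ 4 * volume (freePart τ (pruned τ F) I)) :
    len I ≤ 2 / 3 * ∑ J ∈ children τ (pruned τ F) I, len J := by
  set P := pruned τ F
  set u := ∑ J ∈ children τ P I, len (τ J) with hu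
  have hcover : toSet (τ I) ⊆ freePart τ P I ∪ ⋃ J ∈ children τ P I, toSet (τ J) := by
    intro t ht
    by_cases hfree : t ∈ freePart τ P I
    · exact Or.inl hfree
    obtain ⟨J, hJ, htJ⟩ := Set.mem_iUnion₂.1 (not_not.1 fun h => hfree ⟨ht, h⟩)
    obtain ⟨J', hJ', hsub⟩ := exists_mem_maximalsBy (f := τ) hJ
    exact Or.inr (Set.mem_biUnion (x := J') hJ' (hsub htJ))
  set a := (volume (freePart τ P I)).toReal
  have ha : volume (freePart τ P I) = ENNReal.ofReal a := by
    refine (ENNReal.ofReal_toReal (ne_top_of_le_ne_top ?_ (measure_mono Set.sdiff_subset))).symm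
    rw [volume_toSet]
    exact ENNReal.ofReal_ne_top
  have hle : len (τ I) ≤ a + u := by
    have h := (measure_mono (μ := volume) hcover).trans ((measure_union_le _ _).trans
      (add_le_add_right (measure_biUnion_finset_le _ _) _))
    simp only [volume_toSet, ha] at h
    rwa [← ENNReal.ofReal_sum_of_nonneg fun J _ => (τ J).len_pos.le, ← ENNReal.ofReal_add
      ENNReal.toReal_nonneg (Finset.sum_nonneg fun J _ => (τ J).len_pos.le),
      ENNReal.ofReal_le_ofReal_iff (add_nonneg ENNReal.toReal_nonneg
        (Finset.sum_nonneg fun J _ => (τ J).len_pos.le))] at h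
  have hlt : 4 * a < len (τ I) := by
    rw [ha, volume_toSet, ← ENNReal.ofReal_ofNat 4, ← ENNReal.ofReal_mul (by norm_num)] at hdense
    exact lt_of_not_ge fun h => hdense (ENNReal.ofReal_le_ofReal h)
  have hdouble : ∀ J ∈ children τ P I, 2 * weight τ I ≤ weight τ J := fun J hJ => by
    obtain ⟨hJP, hJI⟩ := Finset.mem_filter.1 (mem_children.1 hJ).1
    exact two_mul_weight_le_of_lt ((Finset.mem_filter.1 hJP).2 I (Finset.mem_filter.1 hI).1 hJI)
  calc len I = weight τ I * len (τ I) := (weight_mul_len τ I).symm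
    _ ≤ weight τ I * (4 / 3 * u) := by
        gcongr
        · exact (weight_pos τ I).le
        · linarith
    _ = 2 / 3 * ∑ J ∈ children τ P I, 2 * weight τ I * len (τ J) := by
        rw [← Finset.mul_sum, ← hu]
        ring
    _ ≤ 2 / 3 * ∑ J ∈ children τ P I, len J := by
        gcongr with J hJ
        rw [← weight_mul_len τ J]
        exact mul_le_mul_of_nonneg_right (hdouble J hJ) (τ J).len_pos.le

lemma sum_len_pruned_le (hτ : Function.Injective τ) (F : Finset DyadicI) :
    ∑ I ∈ pruned τ F, len I ≤ 3 * ∑ I ∈ sparse τ F, len I := by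
  set P := pruned τ F
  set dense := P.filter fun I => ¬ volume (toSet (τ I)) ≤ 4 * volume (freePart τ P I)
  have hsplit : ∑ I ∈ sparse τ F, len I + ∑ I ∈ dense, len I = ∑ I ∈ P, len I :=
    Finset.sum_filter_add_sum_filter_not _ _ _
  have hchildren : ∑ I ∈ dense, ∑ J ∈ children τ P I, len J ≤ ∑ J ∈ P, len J := by
    rw [← Finset.sum_biUnion fun I hI I' hI' hne => disjoint_children hτ
      (Finset.mem_filter.1 hI).1 (Finset.mem_filter.1 hI').1 hne]
    refine Finset.sum_le_sum_of_subset_of_nonneg (Finset.biUnion_subset.2 fun I _ J hJ => ?_)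
      fun J _ _ => J.len_pos.le
    exact (Finset.mem_filter.1 (mem_children.1 hJ).1).1
  have hdense : ∑ I ∈ dense, len I ≤ 2 / 3 * ∑ I ∈ dense, ∑ J ∈ children τ P I, len J := by
    rw [Finset.mul_sum]
    exact Finset.sum_le_sum fun I hI =>
      len_le_two_div_three_mul_sum_children (Finset.mem_filter.1 hI).1 (Finset.mem_filter.1 hI).2
  have hP : 0 ≤ ∑ I ∈ P, len I := Finset.sum_nonneg fun I _ => I.len_pos.le
  linarith

lemma sum_len_sparse_le (hτ : Function.Injective τ) (F : Finset DyadicI) :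
    ∑ I ∈ sparse τ F, ENNReal.ofReal (len I) ≤ 4 * carlesonRatio τ * volume (pointSet F) := by
  rcases (sparse τ F).eq_empty_or_nonempty with hS | hS
  · simp [hS]
  have hcarl : carleson (sparse τ F) ≤ carlesonRatio τ * 4 :=
    (carleson_le_carlesonRatio_mul (by simpa using hS) <|
      ne_top_of_le_ne_top (by simp) (carleson_image_sparse_le hτ F)).trans
      (mul_le_mul_right (carleson_image_sparse_le hτ F) _)
  calc ∑ I ∈ sparse τ F, ENNReal.ofReal (len I)
      ≤ carleson (sparse τ F) * volume (⋃ I ∈ sparse τ F, toSet I) :=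
        sum_len_le_carleson_mul_volume (f := id) Function.injective_id _ fun I hI => hI
    _ ≤ carlesonRatio τ * 4 * volume (pointSet F) := by
        refine mul_le_mul' hcarl (measure_mono (Set.iUnion₂_subset fun I hI => ?_))
        exact Set.subset_biUnion_of_mem (u := toSet)
          (Finset.mem_coe.2 ((Finset.filter_subset _ _).trans (Finset.filter_subset _ _) hI))
    _ = 4 * carlesonRatio τ * volume (pointSet F) := by ring

lemma lintegral_muSet_finset_le (hτ : Function.Injective τ) (F : Finset DyadicI) :
    ∫⁻ t in Set.Icc 0 1, muSet τ F t ≤ 12 * carlesonRatio τ * volume (pointSet F) :=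
  calc ∫⁻ t in Set.Icc 0 1, muSet τ F t
      = ∫⁻ t in Set.Icc 0 1, muSet τ (pruned τ F) t := by rw [muSet_pruned]
    _ ≤ ENNReal.ofReal (∑ I ∈ pruned τ F, len I) := by
        rw [ENNReal.ofReal_sum_of_nonneg fun I _ => I.len_pos.le]
        exact lintegral_muSet_le_sum _
    _ ≤ 3 * ∑ I ∈ sparse τ F, ENNReal.ofReal (len I) := by
        rw [← ENNReal.ofReal_sum_of_nonneg fun I _ => I.len_pos.le, ← ENNReal.ofReal_ofNat 3,
          ← ENNReal.ofReal_mul (by norm_num)]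
        exact ENNReal.ofReal_le_ofReal (sum_len_pruned_le hτ F)
    _ ≤ 3 * (4 * carlesonRatio τ * volume (pointSet F)) :=
        mul_le_mul_right (sum_len_sparse_le hτ F) _
    _ = 12 * carlesonRatio τ * volume (pointSet F) := by ring

theorem cone_le_twelve_mul_carlesonRatio (hτ : Function.Injective τ) :
    Cone τ ≤ 12 * carlesonRatio τ :=
  iSup₂_le fun _ _ => ENNReal.div_le_of_le_mul <|
    lintegral_muSet_le_of_forall_finset fun F _ => lintegral_muSet_finset_le hτ F

end UpperBound

/-- There are absolute constants `c, C > 0` such that for every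
injective `τ : D → D` (with inverse `σ = τ⁻¹` on `τ(D)`),
`c · sup_{𝒞 ⊆ τ(D), 𝒞 ≠ ∅} ⟦σ(𝒞)⟧/⟦𝒞⟧ ≤ C₁ ≤ C · sup_{𝒞 ⊆ τ(D), 𝒞 ≠ ∅} ⟦σ(𝒞)⟧/⟦𝒞⟧`
in `[0,∞]`, where nonempty collections `𝒞 ⊆ τ(D)` are parametrized as `𝒞 = τ(L)`
for nonempty `L ⊆ D`, so that `σ(𝒞) = L`. -/
theorem statement6 :
    ∃ c C : ℝ, 0 < c ∧ 0 < C ∧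
      ∀ (τ : DyadicI → DyadicI), Function.Injective τ →
        ENNReal.ofReal c *
            (⨆ (L : Set DyadicI) (_ : L.Nonempty), carleson L / carleson (τ '' L)) ≤
          Cone τ ∧
        Cone τ ≤ ENNReal.ofReal C *
            (⨆ (L : Set DyadicI) (_ : L.Nonempty), carleson L / carleson (τ '' L)) := by
  refine ⟨1, 12, one_pos, by norm_num, fun τ hτ => ⟨?_, ?_⟩⟩
  · rw [ENNReal.ofReal_one, one_mul]
    exact carlesonRatio_le_cone hτ
  · rw [ENNReal.ofReal_ofNat]
    exact cone_le_twelve_mul_carlesonRatio hτ
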